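/- arXiv:1503.01072 — 6 statements merged into one kernel-verified Lean document; each statement's English description precedes it below -/
import Mathlib

section
/- Let G be a finite group, H ≤ G, g ∈ G, and suppose there exists an irreducible complex character χ of S(g) with ν₂(g,χ) ≠ 0. Then the double coset HgH contains an element g' such that g'² ∈ H and the order of g' is a power of two. -/
/-!
A nonzero indicator `ν₂(g, χ)` is a nonempty sum, so some `x ∈ H` has `t := g x` with `t² ∈ H`.
For odd `m`, `t ^ m = g · x (t²)^((m-1)/2)` still lies in `gH ⊆ HgH` and squares into `H`;
taking `m` to be the odd part of the order of `t` leaves an element of `2`-power order.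
-/

open scoped BigOperators Pointwise Classical
open CategoryTheory

/-- For `H ≤ G` and `g ∈ G`, the stabilizer `S(g) = Stab_H(gH) = H ∩ gHg⁻¹`. -/
def stabCoset {G : Type*} [Group G] (H : Subgroup G) (g : G) : Subgroup G :=
  H ⊓ Subgroup.map (MulAut.conj g).toMonoidHom H

/-- The `m`-th Frobenius–Schur indicator `ν_m(g,χ)` of the simple object of the
group-theoretical fusion category `C(G,H)` attached to `(g,χ)`:
`ν_m(g,χ) = (1/|S(g)|) Σ_{x ∈ H, (gx)^m ∈ H} conj(χ((gx)^m))`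
(recall that for `x ∈ H`, `(gx)^m ∈ H` iff `(gx)^m ∈ S(g)`). -/
noncomputable def nuInd {G : Type*} [Group G] (H : Subgroup G) (g : G) (m : ℕ)
    (χ : ↥(stabCoset H g) → ℂ) : ℂ :=
  (Nat.card ↥(stabCoset H g) : ℂ)⁻¹ *
    ∑ᶠ x : G, if h : x ∈ H ∧ (g * x) ^ m ∈ stabCoset H g
      then (starRingEnd ℂ) (χ ⟨(g * x) ^ m, h.2⟩) else 0

/-- The classical second Frobenius–Schur indicator `ν₂(θ) = (1/|K|) Σ_{x∈K} θ(x²)`. -/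
noncomputable def fsInd {K : Type*} [Group K] (θ : K → ℂ) : ℂ :=
  (Nat.card K : ℂ)⁻¹ * ∑ᶠ x : K, θ (x ^ 2)

section

variable {G : Type*} [Group G]

theorem exists_mem_pow_mem_stabCoset_of_nuInd_ne_zero {H : Subgroup G} {g : G} {m : ℕ}
    {χ : ↥(stabCoset H g) → ℂ} (hν : nuInd H g m χ ≠ 0) :
    ∃ x ∈ H, (g * x) ^ m ∈ stabCoset H g := by
  by_contra! hne
  refine hν ?_
  rw [nuInd, finsum_eq_zero_of_forall_eq_zero, mul_zero]
  exact fun x ↦ dif_neg fun hx ↦ hne x hx.1 hx.2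

theorem orderOf_pow_ordCompl {t : G} (ht : orderOf t ≠ 0) (p : ℕ) :
    orderOf (t ^ ordCompl[p] (orderOf t)) = p ^ (orderOf t).factorization p :=
  orderOf_pow_orderOf_div ht (Nat.ordProj_dvd _ _)

theorem odd_ordCompl_two {n : ℕ} (hn : n ≠ 0) : Odd (ordCompl[2] n) :=
  Nat.odd_iff.mpr (Nat.two_dvd_ne_zero.mp (Nat.not_dvd_ordCompl Nat.prime_two hn))

theorem pow_odd_eq_mul_mul_pow_sq (g x : G) (j : ℕ) :
    (g * x) ^ (2 * j + 1) = g * (x * ((g * x) ^ 2) ^ j) := by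
  rw [pow_succ', pow_mul, mul_assoc]

theorem exists_mem_pow_eq_mul_of_sq_mem {H : Subgroup G} {g x : G} (hx : x ∈ H)
    (hsq : (g * x) ^ 2 ∈ H) {m : ℕ} (hm : Odd m) : ∃ b ∈ H, (g * x) ^ m = g * b := by
  obtain ⟨j, rfl⟩ := hm
  exact ⟨_, mul_mem hx (pow_mem hsq j), pow_odd_eq_mul_mul_pow_sq g x j⟩

end

/-- If some irreducible complex character `χ` of `S(g)` has `ν₂(g,χ) ≠ 0`, then the double
coset `HgH` contains an element `g'` with `g'² ∈ H` whose order is a power of two. -/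
theorem stmt_0 {G : Type} [Group G] [Finite G] (H : Subgroup G) (g : G)
    (h : ∃ V : FDRep ℂ ↥(stabCoset H g), Simple V ∧ nuInd H g 2 V.character ≠ 0) :
    ∃ g' : G, (∃ a ∈ H, ∃ b ∈ H, g' = a * g * b) ∧ g' ^ 2 ∈ H ∧
      ∃ k : ℕ, orderOf g' = 2 ^ k := by
  obtain ⟨V, -, hν⟩ := h
  obtain ⟨x, hx, hsq⟩ := exists_mem_pow_mem_stabCoset_of_nuInd_ne_zero hν
  set t := g * x
  have hsqH : t ^ 2 ∈ H := hsq.1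
  have ht : orderOf t ≠ 0 := (orderOf_pos t).ne'
  obtain ⟨b, hb, hgb⟩ :=
    exists_mem_pow_eq_mul_of_sq_mem hx hsqH (odd_ordCompl_two ht)
  refine ⟨t ^ ordCompl[2] (orderOf t), ⟨1, one_mem H, b, hb, by rw [hgb, one_mul]⟩, ?_,
    _, orderOf_pow_ordCompl ht 2⟩
  rw [← pow_mul, mul_comm, pow_mul]
  exact pow_mem hsqH _
end

section
/- Let G be a finite group, H ≤ G, g ∈ G \ H with g² ∈ H, S = S(g) = H ∩ gHg⁻¹, and let Ŝ = S ∪ gS (a subgroup of G containing S with index 2). Then for every irreducible complex character χ of S: ν₂(g,χ) = (1/|S|) Σ_{x∈S} χ((gx)²) = (1/|S|) Σ_{x∈S} χ(x·(gxg⁻¹)·g²) = (1/|S|) Σ_{x∈Ŝ} χ(x²) − ν₂(χ); here x² ∈ S for every x ∈ Ŝ, so χ may be evaluated at x². -/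
open scoped BigOperators Pointwise Classical
open CategoryTheory

/-!
For `x ∈ S` one has `(gx)² = (gxg⁻¹) g² x ∈ S`, because `g` normalizes `S` and `g² ∈ S`.
The involution `x ↦ (gxg)⁻¹` of `S` sends `(gx)²` to its inverse, and `χ(y⁻¹) = conj χ(y)` for a
character of a finite group (the representation is unitary for an averaged Hermitian form); so
`ν₂(g,χ) = |S|⁻¹ Σ_{x∈S} χ((gx)²)`. Reindexing by `x ↦ gxg⁻¹` gives the second form, and splitting
`Ŝ = S ⊔ gS` writes `Σ_{x∈Ŝ} χ(x²)` as `|S| ν₂(χ) + Σ_{x∈S} χ((gx)²)`.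
-/

universe u

open Matrix
open scoped ComplexOrder

namespace MonoidHom

variable {K 𝕜 n : Type*} [Group K] [Finite K] [RCLike 𝕜] [Fintype n] [DecidableEq n]

/- Weyl's unitary trick: averaging the form `1` over the image of `ρ` gives an invariant positive
definite one. -/
theorem exists_posDef_conjTranspose_mul_mul_eq (ρ : K →* Matrix n n 𝕜) :
    ∃ P : Matrix n n 𝕜, P.PosDef ∧ ∀ x, (ρ x)ᴴ * P * ρ x = P := by
  have := Fintype.ofFinite K
  refine ⟨∑ y, (ρ y)ᴴ * ρ y, ?_, fun x => ?_⟩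
  · refine posDef_sum Finset.univ_nonempty fun y _ => ?_
    simpa only [star_eq_conjTranspose, Matrix.mul_one] using
      ((Group.isUnit y).map ρ).posDef_star_left_conjugate_iff.2 PosDef.one
  · rw [Finset.mul_sum, Finset.sum_mul]
    refine Fintype.sum_equiv (Equiv.mulRight x) _ _ fun y => ?_
    simp only [Equiv.coe_mulRight, map_mul, conjTranspose_mul, Matrix.mul_assoc]

theorem trace_apply_inv (ρ : K →* Matrix n n 𝕜) (x : K) :
    (ρ x⁻¹).trace = star (ρ x).trace := by
  obtain ⟨P, hP, hρ⟩ := ρ.exists_posDef_conjTranspose_mul_mul_eq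
  have := hP.isUnit.invertible
  have hinv : ρ x⁻¹ = P⁻¹ * (ρ x)ᴴ * P := by
    have h := congrArg (· * ρ x⁻¹) (hρ x)
    simp only [Matrix.mul_assoc, ← map_mul, mul_inv_cancel, map_one, Matrix.mul_one] at h
    rw [Matrix.mul_assoc, h, inv_mul_cancel_left_of_invertible]
  rw [hinv, trace_mul_cycle, mul_inv_of_invertible, Matrix.one_mul, trace_conjTranspose]

end MonoidHom

theorem FDRep.char_inv {K 𝕜 : Type u} [Group K] [Finite K] [RCLike 𝕜] (V : FDRep 𝕜 K) (x : K) :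
    V.character x⁻¹ = star (V.character x) := by
  let b := Module.finBasis 𝕜 V
  rw [character, character, LinearMap.trace_eq_matrix_trace 𝕜 b,
    LinearMap.trace_eq_matrix_trace 𝕜 b]
  exact ((LinearMap.toMatrixAlgEquiv b).toMonoidHom.comp V.ρ).trace_apply_inv x

section ExtendByZero

variable {G M : Type*} [Group G] (K : Subgroup G) (χ : K → M)

noncomputable def extendByZero [Zero M] (y : G) : M :=
  if h : y ∈ K then χ ⟨y, h⟩ else 0

theorem extendByZero_coe [Zero M] (x : K) : extendByZero K χ x = χ x :=
  dif_pos x.2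

theorem extendByZero_inv [AddMonoid M] [StarAddMonoid M] (hχ : ∀ x, χ x⁻¹ = star (χ x))
    (y : G) : extendByZero K χ y⁻¹ = star (extendByZero K χ y) := by
  by_cases hy : y ∈ K
  · rw [extendByZero, dif_pos (inv_mem hy), extendByZero, dif_pos hy]
    exact hχ ⟨y, hy⟩
  · rw [extendByZero, dif_neg (inv_mem_iff.not.2 hy), extendByZero, dif_neg hy, star_zero]

end ExtendByZero

section StabCoset

variable {G M : Type*} [Group G] [AddCommMonoid M] {H : Subgroup G} {g x : G}

theorem mem_stabCoset_iff : x ∈ stabCoset H g ↔ x ∈ H ∧ g⁻¹ * x * g ∈ H := by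
  rw [stabCoset, Subgroup.mem_inf, Subgroup.mem_map_equiv]
  rfl

theorem stabCoset_le : stabCoset H g ≤ H :=
  inf_le_left

variable (hg2 : g ^ 2 ∈ H)
include hg2

theorem sq_mem_stabCoset : g ^ 2 ∈ stabCoset H g :=
  mem_stabCoset_iff.2 ⟨hg2, by rwa [show g⁻¹ * g ^ 2 * g = g ^ 2 by simp only [sq]; group]⟩

theorem conj_mem_stabCoset (hx : x ∈ stabCoset H g) : g * x * g⁻¹ ∈ stabCoset H g := by
  obtain ⟨hxH, hxg⟩ := mem_stabCoset_iff.1 hx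
  refine mem_stabCoset_iff.2 ⟨?_, by rwa [show g⁻¹ * (g * x * g⁻¹) * g = x by group]⟩
  rw [show g * x * g⁻¹ = g ^ 2 * (g⁻¹ * x * g) * (g ^ 2)⁻¹ by simp only [sq]; group]
  exact mul_mem (mul_mem hg2 hxg) (inv_mem hg2)

theorem inv_conj_mem_stabCoset (hx : x ∈ stabCoset H g) : g⁻¹ * x * g ∈ stabCoset H g := by
  obtain ⟨hxH, hxg⟩ := mem_stabCoset_iff.1 hx
  refine mem_stabCoset_iff.2 ⟨hxg, ?_⟩
  rw [show g⁻¹ * (g⁻¹ * x * g) * g = (g ^ 2)⁻¹ * x * g ^ 2 by simp only [sq]; group]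
  exact mul_mem (mul_mem (inv_mem hg2) hxH) hg2

theorem mul_sq_mem_stabCoset (hx : x ∈ stabCoset H g) : (g * x) ^ 2 ∈ stabCoset H g := by
  rw [show (g * x) ^ 2 = g * x * g⁻¹ * g ^ 2 * x by simp only [sq]; group]
  exact mul_mem (mul_mem (conj_mem_stabCoset hg2 hx) (sq_mem_stabCoset hg2)) hx

theorem mem_stabCoset_of_mul_sq_mem (hx : x ∈ H) (h : (g * x) ^ 2 ∈ H) : x ∈ stabCoset H g := by
  refine mem_stabCoset_iff.2 ⟨hx, ?_⟩
  rw [show g⁻¹ * x * g = (g ^ 2)⁻¹ * (g * x) ^ 2 * x⁻¹ by simp only [sq]; group]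
  exact mul_mem (mul_mem (inv_mem hg2) h) (inv_mem hx)

theorem finsum_mem_stabCoset_mul_sq_inv (f : G → M) :
    ∑ᶠ x ∈ (stabCoset H g : Set G), f ((g * x) ^ 2)⁻¹ =
      ∑ᶠ x ∈ (stabCoset H g : Set G), f ((g * x) ^ 2) := by
  have hmaps : Set.MapsTo (fun x => (g * x * g)⁻¹) (stabCoset H g) (stabCoset H g) := by
    intro x hx
    dsimp only
    rw [show (g * x * g)⁻¹ = g⁻¹ * x⁻¹ * g * (g ^ 2)⁻¹ by simp only [sq]; group]
    exact mul_mem (inv_conj_mem_stabCoset hg2 (inv_mem hx)) (inv_mem (sq_mem_stabCoset hg2))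
  have hinv : Set.InvOn (fun x => (g * x * g)⁻¹) (fun x => (g * x * g)⁻¹)
      (stabCoset H g) (stabCoset H g) :=
    ⟨fun x _ => by group, fun x _ => by group⟩
  exact finsum_mem_eq_of_bijOn _ (hinv.bijOn hmaps hmaps) fun x _ => by
    congr 1
    simp only [sq]
    group

theorem finsum_mem_stabCoset_mul_sq (f : G → M) :
    ∑ᶠ x ∈ (stabCoset H g : Set G), f ((g * x) ^ 2) =
      ∑ᶠ x ∈ (stabCoset H g : Set G), f (x * (g * x * g⁻¹) * g ^ 2) := by
  have hinv : Set.InvOn (fun x => g⁻¹ * x * g) (fun x => g * x * g⁻¹)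
      (stabCoset H g) (stabCoset H g) :=
    ⟨fun x _ => by group, fun x _ => by group⟩
  refine finsum_mem_eq_of_bijOn _
    (hinv.bijOn (fun _ => conj_mem_stabCoset hg2) fun _ => inv_conj_mem_stabCoset hg2)
    fun x _ => ?_
  congr 1
  simp only [sq]
  group

end StabCoset

theorem finsum_mem_union_image_mul {G M : Type*} [Group G] [AddCommMonoid M] {H : Subgroup G}
    {g : G} (hg : g ∉ H) {s : Set G} (hs : s ⊆ H) (hfin : s.Finite) (f : G → M) :
    ∑ᶠ x ∈ s ∪ (fun x => g * x) '' s, f x = ∑ᶠ x ∈ s, f x + ∑ᶠ x ∈ s, f (g * x) := by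
  have hdisj : Disjoint s ((fun x => g * x) '' s) := by
    refine Set.disjoint_left.2 fun x hx ⟨y, hy, hyx⟩ => hg ?_
    rw [show g = x * y⁻¹ by rw [← hyx]; group]
    exact mul_mem (hs hx) (inv_mem (hs hy))
  rw [finsum_mem_union hdisj hfin (hfin.image _), finsum_mem_image (mul_right_injective g).injOn]

theorem nuInd_two_eq {G : Type*} [Group G] {H : Subgroup G} {g : G} (hg2 : g ^ 2 ∈ H)
    (χ : stabCoset H g → ℂ) :
    nuInd H g 2 χ = (Nat.card (stabCoset H g) : ℂ)⁻¹ *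
      ∑ᶠ x ∈ (stabCoset H g : Set G), star (extendByZero _ χ ((g * x) ^ 2)) := by
  rw [nuInd]
  congr 1
  refine finsum_congr fun x => ?_
  rw [finsum_eq_if]
  by_cases hx : x ∈ stabCoset H g
  · rw [dif_pos ⟨stabCoset_le hx, mul_sq_mem_stabCoset hg2 hx⟩,
      if_pos (show x ∈ (stabCoset H g : Set G) from hx), extendByZero,
      dif_pos (mul_sq_mem_stabCoset hg2 hx), starRingEnd_apply]
  · rw [dif_neg fun h => hx (mem_stabCoset_of_mul_sq_mem hg2 h.1 (stabCoset_le h.2)),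
      if_neg (show x ∉ (stabCoset H g : Set G) from hx)]

theorem stmt_4_general {G : Type} [Group G] [Finite G] (H : Subgroup G) (g : G)
    (hg : g ∉ H) (hg2 : g ^ 2 ∈ H)
    (Shat : Subgroup G)
    (hShat : (Shat : Set G) =
      (stabCoset H g : Set G) ∪ (fun x => g * x) '' (stabCoset H g : Set G))
    (V : FDRep ℂ ↥(stabCoset H g)) :
    (∀ x ∈ stabCoset H g, (g * x) ^ 2 ∈ stabCoset H g) ∧
    (∀ x ∈ Shat, x ^ 2 ∈ stabCoset H g) ∧
    (nuInd H g 2 V.character =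
      (Nat.card ↥(stabCoset H g) : ℂ)⁻¹ * ∑ᶠ x : ↥(stabCoset H g),
        (if h : (g * (x : G)) ^ 2 ∈ stabCoset H g
          then V.character ⟨(g * (x : G)) ^ 2, h⟩ else 0)) ∧
    (nuInd H g 2 V.character =
      (Nat.card ↥(stabCoset H g) : ℂ)⁻¹ * ∑ᶠ x : ↥(stabCoset H g),
        (if h : (x : G) * (g * (x : G) * g⁻¹) * g ^ 2 ∈ stabCoset H g
          then V.character ⟨(x : G) * (g * (x : G) * g⁻¹) * g ^ 2, h⟩ else 0)) ∧
    (nuInd H g 2 V.character =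
      (Nat.card ↥(stabCoset H g) : ℂ)⁻¹ * (∑ᶠ x : ↥Shat,
        (if h : (x : G) ^ 2 ∈ stabCoset H g
          then V.character ⟨(x : G) ^ 2, h⟩ else 0)) - fsInd V.character) := by
  have hν : nuInd H g 2 V.character = (Nat.card (stabCoset H g) : ℂ)⁻¹ *
      ∑ᶠ x ∈ (stabCoset H g : Set G), extendByZero _ V.character ((g * x) ^ 2) := by
    rw [nuInd_two_eq hg2, ← finsum_mem_stabCoset_mul_sq_inv hg2]
    simp only [extendByZero_inv _ V.character (FDRep.char_inv V)]
  have hfs : fsInd V.character = (Nat.card (stabCoset H g) : ℂ)⁻¹ *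
      ∑ᶠ x ∈ (stabCoset H g : Set G), extendByZero _ V.character (x ^ 2) := by
    rw [fsInd, ← finsum_set_coe_eq_finsum_mem]
    simp only [← extendByZero_coe _ V.character, Subgroup.coe_pow]
    rfl
  refine ⟨fun x => mul_sq_mem_stabCoset hg2, fun x hx => ?_, ?_, ?_, ?_⟩
  · rw [← SetLike.mem_coe, hShat] at hx
    rcases hx with hx | ⟨y, hy, rfl⟩
    exacts [pow_mem hx 2, mul_sq_mem_stabCoset hg2 hy]
  · rw [hν, ← finsum_set_coe_eq_finsum_mem]
    rfl
  · rw [hν, finsum_mem_stabCoset_mul_sq hg2, ← finsum_set_coe_eq_finsum_mem]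
    rfl
  · change _ = _ * ∑ᶠ x : (Shat : Set G), extendByZero _ V.character ((x : G) ^ 2) - _
    rw [finsum_set_coe_eq_finsum_mem (f := fun x => extendByZero _ V.character (x ^ 2)), hShat,
      finsum_mem_union_image_mul hg (fun _ hx => stabCoset_le hx) (Set.toFinite _), hν, hfs]
    ring

/-- For `g ∈ G \ H` with `g² ∈ H`, `S = S(g)` and `Ŝ = S ∪ gS` (a subgroup of `G` containing
`S` with index `2`), and any irreducible complex character `χ` of `S`:
`ν₂(g,χ) = (1/|S|) Σ_{x∈S} χ((gx)²) = (1/|S|) Σ_{x∈S} χ(x·(gxg⁻¹)·g²)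
         = (1/|S|) Σ_{x∈Ŝ} χ(x²) − ν₂(χ)`,
where `(gx)² ∈ S` for `x ∈ S` and `x² ∈ S` for `x ∈ Ŝ`, so `χ` may be evaluated there. -/
theorem stmt_4 {G : Type} [Group G] [Finite G] (H : Subgroup G) (g : G)
    (hg : g ∉ H) (hg2 : g ^ 2 ∈ H)
    (Shat : Subgroup G)
    (hShat : (Shat : Set G) =
      (stabCoset H g : Set G) ∪ (fun x => g * x) '' (stabCoset H g : Set G))
    (hle : stabCoset H g ≤ Shat) (hidx : (stabCoset H g).relIndex Shat = 2)
    (V : FDRep ℂ ↥(stabCoset H g)) (hV : Simple V) :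
    (∀ x ∈ stabCoset H g, (g * x) ^ 2 ∈ stabCoset H g) ∧
    (∀ x ∈ Shat, x ^ 2 ∈ stabCoset H g) ∧
    (nuInd H g 2 V.character =
      (Nat.card ↥(stabCoset H g) : ℂ)⁻¹ * ∑ᶠ x : ↥(stabCoset H g),
        (if h : (g * (x : G)) ^ 2 ∈ stabCoset H g
          then V.character ⟨(g * (x : G)) ^ 2, h⟩ else 0)) ∧
    (nuInd H g 2 V.character =
      (Nat.card ↥(stabCoset H g) : ℂ)⁻¹ * ∑ᶠ x : ↥(stabCoset H g),
        (if h : (x : G) * (g * (x : G) * g⁻¹) * g ^ 2 ∈ stabCoset H g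
          then V.character ⟨(x : G) * (g * (x : G) * g⁻¹) * g ^ 2, h⟩ else 0)) ∧
    (nuInd H g 2 V.character =
      (Nat.card ↥(stabCoset H g) : ℂ)⁻¹ * (∑ᶠ x : ↥Shat,
        (if h : (x : G) ^ 2 ∈ stabCoset H g
          then V.character ⟨(x : G) ^ 2, h⟩ else 0)) - fsInd V.character) :=
  stmt_4_general H g hg hg2 Shat hShat V
end

section
/- Let G be a finite group, H ≤ G, and u ∈ G with H ⊆ C_G(u). Then for every g ∈ G: S(ugu⁻¹) = S(g), and ν_m(ugu⁻¹,χ) = ν_m(g,χ) for every irreducible complex character χ of S(g) and every integer m ≥ 1. If moreover g ∈ C_G(u) and u^m = e, then also S(ug) = S(g) and ν_m(ug,χ) = ν_m(g,χ). -/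
open scoped BigOperators Pointwise Classical
open CategoryTheory

lemma mem_stabCoset {G : Type*} [Group G] (H : Subgroup G) (g x : G) :
    x ∈ stabCoset H g ↔ x ∈ H ∧ g⁻¹ * x * g ∈ H := by
  simp only [stabCoset, Subgroup.mem_inf, Subgroup.mem_map, MulEquiv.coe_toMonoidHom,
    MulAut.conj_apply]
  constructor
  · rintro ⟨h1, y, hy, rfl⟩
    refine ⟨h1, ?_⟩
    group
    simpa using hy
  · rintro ⟨h1, h2⟩
    exact ⟨h1, g⁻¹ * x * g, h2, by group⟩

lemma pow_mem_stab {G : Type*} [Group G] (H : Subgroup G) (g x : G) (hx : x ∈ H) (m : ℕ)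
    (h : (g * x) ^ m ∈ H) : (g * x) ^ m ∈ stabCoset H g := by
  rw [mem_stabCoset]
  refine ⟨h, ?_⟩
  have e1 : g⁻¹ * (g * x) ^ m * g = (x * g) ^ m := by
    have := map_pow (MulAut.conj g⁻¹) (g * x) m
    simp only [MulAut.conj_apply, inv_inv] at this
    rw [this]; group
  have e2 : (x * g) ^ m = x * (g * x) ^ m * x⁻¹ := by
    have := map_pow (MulAut.conj x) (g * x) m
    simp only [MulAut.conj_apply] at this
    rw [this]
    congr 1
    group
  rw [e1, e2]
  exact H.mul_mem (H.mul_mem hx h) (H.inv_mem hx)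

lemma nu_eq {G : Type*} [Group G] (H : Subgroup G) (g g' : G) (m : ℕ)
    (hS : stabCoset H g' = stabCoset H g)
    (h1 : ∀ x ∈ H, ((g' * x) ^ m ∈ H ↔ (g * x) ^ m ∈ H))
    (h2 : ∀ x ∈ H, (g * x) ^ m ∈ H → (g' * x) ^ m = (g * x) ^ m)
    (χ : ↥(stabCoset H g) → ℂ) :
    nuInd H g' m (fun x => if h : (x : G) ∈ stabCoset H g then χ ⟨(x : G), h⟩ else 0) =
      nuInd H g m χ := by
  unfold nuInd
  congr 1
  · rw [hS]
  · apply finsum_congr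
    intro x
    by_cases hx : x ∈ H
    · by_cases hy : (g * x) ^ m ∈ H
      · have hy' : (g * x) ^ m ∈ stabCoset H g := pow_mem_stab H g x hx m hy
        have he : (g' * x) ^ m = (g * x) ^ m := h2 x hx hy
        have hz' : (g' * x) ^ m ∈ stabCoset H g' := by
          rw [hS, he]; exact hy'
        rw [dif_pos ⟨hx, hz'⟩, dif_pos ⟨hx, hy'⟩]
        congr 1
        simp only [he, dif_pos hy']
      · have hc1 : ¬ (x ∈ H ∧ (g' * x) ^ m ∈ stabCoset H g') := by
          rintro ⟨-, hz⟩
          rw [mem_stabCoset] at hz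
          exact hy ((h1 x hx).mp hz.1)
        have hc2 : ¬ (x ∈ H ∧ (g * x) ^ m ∈ stabCoset H g) := by
          rintro ⟨-, hz⟩
          rw [mem_stabCoset] at hz
          exact hy hz.1
        rw [dif_neg hc1, dif_neg hc2]
    · rw [dif_neg (fun h => hx h.1), dif_neg (fun h => hx h.1)]

/-- If `u ∈ G` centralizes `H`, then for every `g ∈ G`: `S(ugu⁻¹) = S(g)` and
`ν_m(ugu⁻¹,χ) = ν_m(g,χ)` for every irreducible character `χ` of `S(g)` and every `m ≥ 1`.
If moreover `gu = ug` and `u^m = e`, then also `S(ug) = S(g)` and `ν_m(ug,χ) = ν_m(g,χ)`. -/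
theorem stmt_7 {G : Type} [Group G] [Finite G] (H : Subgroup G) (u : G)
    (hu : ∀ h ∈ H, u * h = h * u) (g : G) :
    (stabCoset H (u * g * u⁻¹) = stabCoset H g ∧
      ∀ m : ℕ, 1 ≤ m → ∀ (V : FDRep ℂ ↥(stabCoset H g)), Simple V →
        nuInd H (u * g * u⁻¹) m
            (fun x => if h : (x : G) ∈ stabCoset H g then V.character ⟨(x : G), h⟩ else 0) =
          nuInd H g m V.character) ∧
    (g * u = u * g → ∀ m : ℕ, 1 ≤ m → u ^ m = 1 →
      stabCoset H (u * g) = stabCoset H g ∧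
      ∀ (V : FDRep ℂ ↥(stabCoset H g)), Simple V →
        nuInd H (u * g) m
            (fun x => if h : (x : G) ∈ stabCoset H g then V.character ⟨(x : G), h⟩ else 0) =
          nuInd H g m V.character) := by
  -- basic facts about conjugation by u
  have hfix : ∀ y ∈ H, u * y * u⁻¹ = y := by
    intro y hy
    rw [hu y hy]
    group
  have hfix' : ∀ y ∈ H, u⁻¹ * y * u = y := by
    intro y hy
    rw [mul_assoc, ← hu y hy]
    group
  have hconjH : ∀ y : G, u * y * u⁻¹ ∈ H ↔ y ∈ H := by
    intro y
    constructor
    · intro hy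
      have := hfix _ hy
      have h2 : u * (u * y * u⁻¹) * u⁻¹ = u * y * u⁻¹ := this
      have h3 : u * y * u⁻¹ = y := by
        have := mul_left_cancel (mul_right_cancel h2)
        exact this
      rwa [h3] at hy
    · intro hy
      rwa [hfix _ hy]
  -- first part
  have hS1 : stabCoset H (u * g * u⁻¹) = stabCoset H g := by
    ext x
    rw [mem_stabCoset, mem_stabCoset]
    constructor
    · rintro ⟨hxH, h2⟩
      refine ⟨hxH, ?_⟩
      have e : (u * g * u⁻¹)⁻¹ * x * (u * g * u⁻¹) = u * (g⁻¹ * x * g) * u⁻¹ := by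
        have e0 : (u * g * u⁻¹)⁻¹ * x * (u * g * u⁻¹)
            = u * g⁻¹ * (u⁻¹ * x * u) * g * u⁻¹ := by group
        rw [e0, hfix' x hxH]
        group
      rw [e, hconjH] at h2
      exact h2
    · rintro ⟨hxH, h2⟩
      refine ⟨hxH, ?_⟩
      have e : (u * g * u⁻¹)⁻¹ * x * (u * g * u⁻¹) = u * (g⁻¹ * x * g) * u⁻¹ := by
        have e0 : (u * g * u⁻¹)⁻¹ * x * (u * g * u⁻¹)
            = u * g⁻¹ * (u⁻¹ * x * u) * g * u⁻¹ := by group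
        rw [e0, hfix' x hxH]
        group
      rw [e, hconjH]
      exact h2
  refine ⟨⟨hS1, ?_⟩, ?_⟩
  · intro m _ V _
    refine nu_eq H g (u * g * u⁻¹) m hS1 ?_ ?_ V.character
    · intro x hx
      have e : (u * g * u⁻¹ * x) ^ m = u * (g * x) ^ m * u⁻¹ := by
        have e0 : u * g * u⁻¹ * x = u * (g * x) * u⁻¹ := by
          have e1 : u * g * u⁻¹ * x = u * g * (u⁻¹ * x * u) * u⁻¹ := by group
          rw [e1, hfix' x hx]
          group
        rw [e0]
        have := map_pow (MulAut.conj u) (g * x) m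
        simp only [MulAut.conj_apply] at this
        rw [← this]
      rw [e, hconjH]
    · intro x hx hmem
      have e0 : u * g * u⁻¹ * x = u * (g * x) * u⁻¹ := by
        have e1 : u * g * u⁻¹ * x = u * g * (u⁻¹ * x * u) * u⁻¹ := by group
        rw [e1, hfix' x hx]
        group
      rw [e0]
      have := map_pow (MulAut.conj u) (g * x) m
      simp only [MulAut.conj_apply] at this
      rw [← this]
      exact hfix _ hmem
  · intro hcg m _ hum
    have hpow : ∀ x ∈ H, (u * g * x) ^ m = (g * x) ^ m := by
      intro x hx
      have c1 : Commute u g := hcg.symm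
      have c2 : Commute u x := hu x hx
      have c3 : Commute u (g * x) := c1.mul_right c2
      calc (u * g * x) ^ m = (u * (g * x)) ^ m := by rw [mul_assoc]
        _ = u ^ m * (g * x) ^ m := c3.mul_pow m
        _ = (g * x) ^ m := by rw [hum, one_mul]
    have hS2 : stabCoset H (u * g) = stabCoset H g := by
      ext x
      rw [mem_stabCoset, mem_stabCoset]
      have e : (u * g)⁻¹ * x * (u * g) = g⁻¹ * x * g ∨ True := Or.inr trivial
      constructor
      · rintro ⟨hxH, h2⟩
        refine ⟨hxH, ?_⟩
        have e : (u * g)⁻¹ * x * (u * g) = g⁻¹ * x * g := by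
          have e0 : (u * g)⁻¹ * x * (u * g) = g⁻¹ * (u⁻¹ * x * u) * g := by group
          rw [e0, hfix' x hxH]
        rwa [e] at h2
      · rintro ⟨hxH, h2⟩
        refine ⟨hxH, ?_⟩
        have e : (u * g)⁻¹ * x * (u * g) = g⁻¹ * x * g := by
          have e0 : (u * g)⁻¹ * x * (u * g) = g⁻¹ * (u⁻¹ * x * u) * g := by group
          rw [e0, hfix' x hxH]
        rwa [e]
    refine ⟨hS2, ?_⟩
    intro V _
    refine nu_eq H g (u * g) m hS2 ?_ ?_ V.character
    · intro x hx
      rw [hpow x hx]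
    · intro x hx _
      exact hpow x hx
end

section
/- Let ℓ < n, let S_ℓ ≤ S_n be the subgroup of permutations fixing each of ℓ+1,…,n, and let p be a prime with ℓ + p > n. Let g ∈ S_n \ S_ℓ be such that the number of points of {ℓ+1,…,n} moved by g is strictly less than p − ℓ. Then ν_p(g,χ) = 0 for every irreducible complex character χ of S(g) = S_ℓ ∩ g S_ℓ g⁻¹. -/
open scoped BigOperators Pointwise Classical
open CategoryTheory

/-- The copy of `S_ℓ` inside `S_n`: permutations of `{1,…,n}` (0-indexed as `Fin n`)
fixing each of the points `ℓ+1,…,n` (0-indexed: the points with index `≥ ℓ`). -/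
def fixSubgroup (n ℓ : ℕ) : Subgroup (Equiv.Perm (Fin n)) where
  carrier := {σ | ∀ i : Fin n, ℓ ≤ (i : ℕ) → σ i = i}
  one_mem' := fun _ _ => rfl
  mul_mem' := by
    intro a b ha hb i hi
    simp only [Equiv.Perm.mul_apply, hb i hi, ha i hi]
  inv_mem' := by
    intro a ha i hi
    simp only [Set.mem_setOf_eq] at *
    exact (Equiv.symm_apply_eq a).mpr (ha i hi).symm

/-!
The sum defining `ν_p(g,χ)` is empty. If `x ∈ S_ℓ`, `σ = g x` and `σ^p ∈ S_ℓ`, pick a point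
`i ∈ {ℓ+1,…,n}` moved by `g`. Then `σ i = g i ≠ i` while `σ^p i = i`, so the cycle of `σ`
through `i` has length exactly `p`. But `σ` agrees with `g` on `{ℓ+1,…,n}`, so it moves at
most `ℓ + #{i ∈ {ℓ+1,…,n} | g i ≠ i} < p` points.
-/

open Equiv

namespace Equiv.Perm

variable {α : Type*} [Fintype α] [DecidableEq α]

theorem card_support_cycleOf_eq_prime {σ : Perm α} {a : α} {p : ℕ} (hp : p.Prime)
    (ha : σ a ≠ a) (hpa : (σ ^ p) a = a) : (σ.cycleOf a).support.card = p := by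
  have := Fact.mk hp
  have hcyc := σ.isCycle_cycleOf ha
  have hpow : σ.cycleOf a ^ p = 1 :=
    (hcyc.pow_eq_one_iff' (by rwa [cycleOf_apply_self])).2 (by rwa [cycleOf_pow_apply_self])
  rw [← hcyc.orderOf]
  exact orderOf_eq_prime hpow hcyc.ne_one

theorem prime_le_card_support {σ : Perm α} {a : α} {p : ℕ} (hp : p.Prime)
    (ha : σ a ≠ a) (hpa : (σ ^ p) a = a) : p ≤ σ.support.card :=
  card_support_cycleOf_eq_prime hp ha hpa ▸ Finset.card_le_card (σ.support_cycleOf_le a)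

end Equiv.Perm

section fixSubgroup

variable {n ℓ : ℕ}

theorem mem_fixSubgroup {σ : Perm (Fin n)} :
    σ ∈ fixSubgroup n ℓ ↔ ∀ i : Fin n, ℓ ≤ (i : ℕ) → σ i = i :=
  Iff.rfl

theorem card_support_mul_le (g : Perm (Fin n)) {x : Perm (Fin n)} (hx : x ∈ fixSubgroup n ℓ) :
    (g * x).support.card ≤ ℓ + Set.ncard {i : Fin n | ℓ ≤ (i : ℕ) ∧ g i ≠ i} := by
  set s := (g * x).support
  have hlow : (s.filter fun i : Fin n => (i : ℕ) < ℓ).card ≤ ℓ := by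
    simpa using Finset.card_le_card_of_injOn (t := Finset.range ℓ) (fun i : Fin n => (i : ℕ))
      (fun i hi => Finset.mem_range.2 (Finset.mem_filter.1 hi).2)
      (fun _ _ _ _ h => Fin.val_injective h)
  have hhigh : (s.filter fun i : Fin n => ¬ (i : ℕ) < ℓ).card ≤
      Set.ncard {i : Fin n | ℓ ≤ (i : ℕ) ∧ g i ≠ i} := by
    rw [Set.ncard_eq_toFinset_card']
    refine Finset.card_le_card fun i hi => ?_
    obtain ⟨hmoved, hlt⟩ := Finset.mem_filter.1 hi
    have hi : ℓ ≤ (i : ℕ) := not_lt.1 hlt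
    have hgx : (g * x) i = g i := by rw [Perm.mul_apply, mem_fixSubgroup.1 hx i hi]
    exact Set.mem_toFinset.2 ⟨hi, hgx ▸ Perm.mem_support.1 hmoved⟩
  rw [← Finset.card_filter_add_card_filter_not (fun i : Fin n => (i : ℕ) < ℓ)]
  exact add_le_add hlow hhigh

theorem mul_pow_prime_notMem_fixSubgroup {p : ℕ} (hp : p.Prime) {g : Perm (Fin n)}
    (hg : g ∉ fixSubgroup n ℓ) (hsupp : Set.ncard {i : Fin n | ℓ ≤ (i : ℕ) ∧ g i ≠ i} < p - ℓ)
    {x : Perm (Fin n)} (hx : x ∈ fixSubgroup n ℓ) : (g * x) ^ p ∉ fixSubgroup n ℓ := by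
  intro hpow
  obtain ⟨i, hi, hgi⟩ : ∃ i : Fin n, ℓ ≤ (i : ℕ) ∧ g i ≠ i := by
    simpa [mem_fixSubgroup] using hg
  have hmoved : (g * x) i ≠ i := by rwa [Perm.mul_apply, mem_fixSubgroup.1 hx i hi]
  have := Perm.prime_le_card_support hp hmoved (mem_fixSubgroup.1 hpow i hi)
  have := card_support_mul_le g hx
  omega

end fixSubgroup

theorem nuInd_eq_zero_of_forall_notMem {G : Type*} [Group G] (H : Subgroup G) (g : G) (m : ℕ)
    (χ : ↥(stabCoset H g) → ℂ) (h : ∀ x ∈ H, (g * x) ^ m ∉ H) : nuInd H g m χ = 0 := by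
  rw [nuInd, finsum_congr fun x => dif_neg fun hx => h x hx.1 hx.2.1, finsum_zero, mul_zero]

theorem stmt_9_general (n ℓ p : ℕ) (hp : p.Prime)
    (g : Equiv.Perm (Fin n)) (hg : g ∉ fixSubgroup n ℓ)
    (hsupp : Set.ncard {i : Fin n | ℓ ≤ (i : ℕ) ∧ g i ≠ i} < p - ℓ) :
    ∀ (V : FDRep ℂ ↥(stabCoset (fixSubgroup n ℓ) g)), Simple V →
      nuInd (fixSubgroup n ℓ) g p V.character = 0 := fun _ _ =>
  nuInd_eq_zero_of_forall_notMem _ _ _ _ fun _ hx =>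
    mul_pow_prime_notMem_fixSubgroup hp hg hsupp hx

/-- Let `S_ℓ ⊂ S_n` (`ℓ < n`) and let `p` be a prime with `ℓ + p > n`. If `g ∈ S_n \ S_ℓ`
moves fewer than `p − ℓ` of the points `ℓ+1,…,n`, then `ν_p(g,χ) = 0` for every irreducible
complex character `χ` of `S(g)`. -/
theorem stmt_9 (n ℓ p : ℕ) (hl : ℓ < n) (hp : p.Prime) (hlp : n < ℓ + p)
    (g : Equiv.Perm (Fin n)) (hg : g ∉ fixSubgroup n ℓ)
    (hsupp : Set.ncard {i : Fin n | ℓ ≤ (i : ℕ) ∧ g i ≠ i} < p - ℓ) :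
    ∀ (V : FDRep ℂ ↥(stabCoset (fixSubgroup n ℓ) g)), Simple V →
      nuInd (fixSubgroup n ℓ) g p V.character = 0 :=
  stmt_9_general n ℓ p hp g hg hsupp
end

section
/- Let ℓ ≤ n and let S_ℓ ≤ S_n be the subgroup of permutations fixing each of ℓ+1,…,n. Then every (S_ℓ,S_ℓ)-double coset in S_n contains an element σ such that every orbit of σ of size at least 2 contains at most one element of {1,…,ℓ}. Moreover this representative is unique up to conjugation by S_ℓ: if σ and σ' both have this property and S_ℓ σ S_ℓ = S_ℓ σ' S_ℓ, then σ' = s σ s⁻¹ for some s ∈ S_ℓ. -/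
open scoped BigOperators Pointwise Classical
open CategoryTheory

/-!
Let `L` be the set of points `1, …, ℓ`, so that `S_ℓ` is the pointwise stabiliser of the
complement of `L`.

Existence: if two points `i ≠ j` of `L` lie in one cycle of `g`, then `g * swap i j` lies in the
same double coset and splits that cycle into two, separating `i` from `j` without merging any
cycles; so the number of pairs of points of `L` sharing a cycle strictly drops.

Uniqueness: if `σ` and `a * σ * b` (`a, b ∈ S_ℓ`) both have the property, then `b = a⁻¹`.
Off `L`, `a * σ * b` acts as `a * σ` and its inverse as `b⁻¹ * σ⁻¹`. Walking backwards from a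
point `e ∉ L` with `σ e ∈ L`, both permutations therefore visit the same points outside `L` until
they enter `L`, and the separation property identifies the entry points as `σ e` and
`(a * σ * b) e`. Hence `(a * σ * b)² e = σ² e`, and from this `(a * σ * b) * a = a * σ` is
checked pointwise.
-/

open Equiv Set

namespace Equiv.Perm

variable {α : Type*}

theorem SameCycle.mem_of_mapsTo [Finite α] {f : Perm α} {s : Set α} {x y : α}
    (hs : MapsTo f s s) (h : f.SameCycle x y) (hx : x ∈ s) : y ∈ s := by
  obtain ⟨k, rfl⟩ := h.exists_nat_pow_eq
  rw [coe_pow]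
  exact hs.iterate k hx

section MulSwap

variable [Finite α] [DecidableEq α] {g : Perm α} {i j : α}

theorem SameCycle.of_mul_swap (hij : g.SameCycle i j) {x y : α}
    (h : (g * swap i j).SameCycle x y) : g.SameCycle x y := by
  refine h.mem_of_mapsTo (s := {z | g.SameCycle x z}) (fun z hz => ?_) (SameCycle.refl g x)
  have hswap : g.SameCycle z (swap i j z) := by
    rcases eq_or_ne z i with rfl | hzi
    · simpa using hij
    rcases eq_or_ne z j with rfl | hzj
    · simpa using hij.symm
    · rw [swap_apply_of_ne_of_ne hzi hzj]
  exact (SameCycle.trans hz hswap).apply_right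

theorem SameCycle.not_mul_swap (hne : i ≠ j) (hij : g.SameCycle i j) :
    ¬ (g * swap i j).SameCycle i j := by
  have hex : ∃ m, 0 < m ∧ (g ^ m) j = i := by
    obtain ⟨m, hm, -, h⟩ := hij.symm.exists_pow_eq''
    exact ⟨m, hm, h⟩
  set m := Nat.find hex
  obtain ⟨hm0, hm⟩ : 0 < m ∧ (g ^ m) j = i := Nat.find_spec hex
  -- `g * swap i j` closes the arc `g j, g² j, …, gᵐ j = i` of the cycle of `g` into a cycle
  set S := {z | ∃ k, 0 < k ∧ k ≤ m ∧ (g ^ k) j = z}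
  have hjS : j ∉ S := by
    rintro ⟨k, hk0, hkm, hk⟩
    rcases hkm.eq_or_lt with rfl | hlt
    · exact hne (hm.symm.trans hk)
    · refine Nat.find_min hex (show m - k < m by omega) ⟨by omega, ?_⟩
      calc (g ^ (m - k)) j = (g ^ (m - k)) ((g ^ k) j) := by rw [hk]
        _ = i := by rw [← mul_apply, ← pow_add, Nat.sub_add_cancel hkm, hm]
  have hS : MapsTo (g * swap i j) S S := by
    rintro z ⟨k, hk0, hkm, rfl⟩
    have hzj : (g ^ k) j ≠ j := fun h => hjS ⟨k, hk0, hkm, h⟩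
    rw [mul_apply]
    by_cases hzi : (g ^ k) j = i
    · rw [hzi, swap_apply_left]
      exact ⟨1, one_pos, hm0, by rw [pow_one]⟩
    · rw [swap_apply_of_ne_of_ne hzi hzj]
      have hkm' : k ≠ m := fun h => hzi (h ▸ hm)
      exact ⟨k + 1, k.succ_pos, by omega, by rw [pow_succ', mul_apply]⟩
  exact fun h => hjS (h.mem_of_mapsTo hS ⟨m, hm0, le_rfl, hm⟩)

end MulSwap

variable {L : Set α} {a b σ : Perm α} {e x y : α}

theorem apply_eq_self_of_mem_fixingSubgroup (ha : a ∈ fixingSubgroup (Perm α) Lᶜ)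
    (hx : x ∉ L) : a x = x :=
  (mem_fixingSubgroup_iff _).1 ha x hx

theorem apply_mem_iff_of_mem_fixingSubgroup (ha : a ∈ fixingSubgroup (Perm α) Lᶜ) :
    a x ∈ L ↔ x ∈ L := by
  by_cases hx : x ∈ L
  · refine iff_of_true ?_ hx
    by_contra h
    have hfix : x = a x := by simpa using apply_eq_self_of_mem_fixingSubgroup (inv_mem ha) h
    exact h (hfix ▸ hx)
  · rw [apply_eq_self_of_mem_fixingSubgroup ha hx]

theorem swap_mem_fixingSubgroup_compl [DecidableEq α] {i j : α} (hi : i ∈ L) (hj : j ∈ L) :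
    swap i j ∈ fixingSubgroup (Perm α) Lᶜ :=
  (mem_fixingSubgroup_iff _).2 fun _ hx =>
    swap_apply_of_ne_of_ne (fun h => hx (h ▸ hi)) (fun h => hx (h ▸ hj))

theorem mul_mul_apply_of_notMem (hb : b ∈ fixingSubgroup (Perm α) Lᶜ) (hx : x ∉ L) :
    (a * σ * b) x = a (σ x) := by
  rw [mul_apply, apply_eq_self_of_mem_fixingSubgroup hb hx, mul_apply]

theorem mul_mul_inv_apply_of_notMem (ha : a ∈ fixingSubgroup (Perm α) Lᶜ) (hy : y ∉ L) :
    (a * σ * b)⁻¹ y = b⁻¹ (σ⁻¹ y) := by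
  simp only [mul_inv_rev, mul_apply, apply_eq_self_of_mem_fixingSubgroup (inv_mem ha) hy]

theorem inv_pow_mul_mul_apply (ha : a ∈ fixingSubgroup (Perm α) Lᶜ)
    (hb : b ∈ fixingSubgroup (Perm α) Lᶜ) {k : ℕ} (hk : ∀ j ≤ k, (σ⁻¹ ^ j) e ∉ L) :
    ((a * σ * b)⁻¹ ^ k) e = (σ⁻¹ ^ k) e := by
  induction k with
  | zero => rfl
  | succ k ih =>
    rw [pow_succ', mul_apply, ih fun j hj => hk j (by omega),
      mul_mul_inv_apply_of_notMem ha (hk k (by omega)), ← mul_apply σ⁻¹, ← pow_succ',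
      apply_eq_self_of_mem_fixingSubgroup (inv_mem hb) (hk _ le_rfl)]

def CycleSeparated (L : Set α) (σ : Perm α) : Prop :=
  ∀ i j, i ∈ L → j ∈ L → σ i ≠ i → σ.SameCycle i j → i = j

def cycleMates (L : Set α) (g : Perm α) : Set (α × α) :=
  {p | p.1 ∈ L ∧ p.2 ∈ L ∧ p.1 ≠ p.2 ∧ g.SameCycle p.1 p.2}

theorem cycleMates_mul_swap_ssubset [Finite α] [DecidableEq α] {g : Perm α} {i j : α}
    (hi : i ∈ L) (hj : j ∈ L) (hne : i ≠ j) (hij : g.SameCycle i j) :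
    cycleMates L (g * swap i j) ⊂ cycleMates L g :=
  ⟨fun _ ⟨h₁, h₂, hne, hp⟩ => ⟨h₁, h₂, hne, hij.of_mul_swap hp⟩,
    fun h => hij.not_mul_swap hne
      (h (show (i, j) ∈ cycleMates L g from ⟨hi, hj, hne, hij⟩)).2.2.2⟩

theorem exists_mul_cycleSeparated [Finite α] (L : Set α) (g : Perm α) :
    ∃ b ∈ fixingSubgroup (Perm α) Lᶜ, CycleSeparated L (g * b) := by
  classical
  induction hN : (cycleMates L g).ncard using Nat.strong_induction_on generalizing g with
  | _ N ih =>
  by_cases hg : CycleSeparated L g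
  · exact ⟨1, one_mem _, by rwa [mul_one]⟩
  obtain ⟨i, j, hi, hj, -, hij, hne⟩ :
      ∃ i j, i ∈ L ∧ j ∈ L ∧ g i ≠ i ∧ g.SameCycle i j ∧ i ≠ j := by
    simpa [CycleSeparated] using hg
  have hlt := Set.ncard_lt_ncard (cycleMates_mul_swap_ssubset hi hj hne hij)
  obtain ⟨b, hb, hgb⟩ := ih _ (hN ▸ hlt) (g * swap i j) rfl
  refine ⟨swap i j * b, mul_mem (swap_mem_fixingSubgroup_compl hi hj) hb, ?_⟩
  rwa [← mul_assoc]

namespace CycleSeparated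

theorem apply_notMem (hσ : CycleSeparated L σ) (hx : x ∈ L) (hmv : σ x ≠ x) : σ x ∉ L :=
  fun h => hmv (hσ x (σ x) hx h hmv (SameCycle.refl σ x).apply_right).symm

theorem inv_apply_notMem (hσ : CycleSeparated L σ) (hx : x ∈ L) (hmv : σ x ≠ x) :
    σ⁻¹ x ∉ L :=
  fun h => hmv <| eq_inv_iff_eq.1 <|
    hσ x _ hx h hmv (sameCycle_inv.1 (SameCycle.refl σ⁻¹ x).apply_right)

theorem apply_apply_eq_inv_pow (hσ : CycleSeparated L σ) (he : e ∉ L) (hσe : σ e ∈ L) {k : ℕ}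
    (hk : (σ⁻¹ ^ (k + 1)) e ∈ L) : σ (σ e) = (σ⁻¹ ^ k) e := by
  have hmv : σ (σ e) ≠ σ e := fun h => he (σ.injective h ▸ hσe)
  have hcycle : σ.SameCycle (σ e) ((σ⁻¹ ^ (k + 1)) e) :=
    sameCycle_apply_left.2 (sameCycle_inv.1 (sameCycle_pow_right.2 (SameCycle.refl _ _)))
  rw [hσ _ _ hσe hk hmv hcycle, pow_succ', mul_apply, Perm.coe_inv, apply_symm_apply]

theorem mul_mul_apply_apply [Finite α] (hσ : CycleSeparated L σ)
    (hτ : CycleSeparated L (a * σ * b))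
    (ha : a ∈ fixingSubgroup (Perm α) Lᶜ) (hb : b ∈ fixingSubgroup (Perm α) Lᶜ)
    (he : e ∉ L) (hσe : σ e ∈ L) : (a * σ * b) ((a * σ * b) e) = σ (σ e) := by
  have hex : ∃ k, (σ⁻¹ ^ (k + 1)) e ∈ L := by
    obtain ⟨k, hk0, -, hk⟩ :=
      (sameCycle_inv.2 (SameCycle.refl σ e).apply_right).exists_pow_eq''
    exact ⟨k - 1, by rwa [Nat.sub_add_cancel hk0, hk]⟩
  set k := Nat.find hex
  have hk : ∀ j ≤ k, (σ⁻¹ ^ j) e ∉ L := by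
    rintro (_ | j) hj
    · simpa using he
    · exact Nat.find_min hex (by omega)
  have hagree := inv_pow_mul_mul_apply ha hb hk
  rw [hσ.apply_apply_eq_inv_pow he hσe (Nat.find_spec hex), ← hagree]
  refine hτ.apply_apply_eq_inv_pow he ?_ ?_
  · rw [mul_mul_apply_of_notMem hb he]
    exact (apply_mem_iff_of_mem_fixingSubgroup ha).2 hσe
  · rw [pow_succ', mul_apply, hagree, mul_mul_inv_apply_of_notMem ha (hk k le_rfl),
      ← mul_apply σ⁻¹, ← pow_succ']
    exact (apply_mem_iff_of_mem_fixingSubgroup (inv_mem hb)).2 (Nat.find_spec hex)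

theorem mul_mul_apply_ne_of_apply_ne (hσ : CycleSeparated L σ)
    (ha : a ∈ fixingSubgroup (Perm α) Lᶜ) (hb : b ∈ fixingSubgroup (Perm α) Lᶜ)
    (hx : x ∈ L) (hmv : σ x ≠ x) : (a * σ * b) (a x) ≠ a x := by
  have he := hσ.inv_apply_notMem hx hmv
  have hax : a x = (a * σ * b) (σ⁻¹ x) := by
    rw [mul_mul_apply_of_notMem hb he, Perm.coe_inv, apply_symm_apply]
  intro h
  rw [hax, (a * σ * b).injective.eq_iff] at h
  exact he (h ▸ hax ▸ (apply_mem_iff_of_mem_fixingSubgroup ha).2 hx)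

theorem mul_mul_apply_eq_of_apply_eq (hτ : CycleSeparated L (a * σ * b))
    (ha : a ∈ fixingSubgroup (Perm α) Lᶜ) (hb : b ∈ fixingSubgroup (Perm α) Lᶜ)
    (hx : x ∈ L) (hfix : σ x = x) : (a * σ * b) (a x) = a x := by
  by_contra h
  have hmv := hτ.mul_mul_apply_ne_of_apply_ne (inv_mem ha) (inv_mem hb)
    ((apply_mem_iff_of_mem_fixingSubgroup ha).2 hx) h
  rw [show a⁻¹ * (a * σ * b) * b⁻¹ = σ by group, Perm.coe_inv, symm_apply_apply] at hmv
  exact hmv hfix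

theorem eq_inv_of_mul_mul [Finite α] (hσ : CycleSeparated L σ)
    (hτ : CycleSeparated L (a * σ * b))
    (ha : a ∈ fixingSubgroup (Perm α) Lᶜ) (hb : b ∈ fixingSubgroup (Perm α) Lᶜ) :
    b = a⁻¹ := by
  have hcomm : a * σ * b * a = a * σ := by
    ext x
    change (a * σ * b) (a x) = a (σ x)
    by_cases hxL : x ∈ L
    · by_cases hfix : σ x = x
      · rw [hτ.mul_mul_apply_eq_of_apply_eq ha hb hxL hfix, hfix]
      · obtain ⟨e, rfl⟩ := σ.surjective x
        have he : e ∉ L := by simpa using hσ.inv_apply_notMem hxL hfix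
        rw [← mul_mul_apply_of_notMem hb he, hσ.mul_mul_apply_apply hτ ha hb he hxL,
          apply_eq_self_of_mem_fixingSubgroup ha (hσ.apply_notMem hxL hfix)]
    · rw [apply_eq_self_of_mem_fixingSubgroup ha hxL, mul_mul_apply_of_notMem hb hxL]
  exact eq_inv_of_mul_eq_one_left <|
    mul_left_cancel (a := a * σ) (by rw [mul_one, ← mul_assoc, hcomm])

end CycleSeparated

end Equiv.Perm

theorem fixSubgroup_eq_fixingSubgroup (n ℓ : ℕ) :
    fixSubgroup n ℓ = fixingSubgroup (Perm (Fin n)) {i : Fin n | (i : ℕ) < ℓ}ᶜ := by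
  ext σ
  simp only [mem_fixingSubgroup_iff, mem_compl_iff, mem_ofPred_eq, not_lt, Perm.smul_def]
  rfl

theorem stmt_11_general (n ℓ : ℕ) :
    (∀ g : Equiv.Perm (Fin n), ∃ σ : Equiv.Perm (Fin n),
      (∃ a ∈ fixSubgroup n ℓ, ∃ b ∈ fixSubgroup n ℓ, σ = a * g * b) ∧
      (∀ i j : Fin n, (i : ℕ) < ℓ → (j : ℕ) < ℓ → σ i ≠ i →
        (∃ k : ℤ, (σ ^ k) i = j) → i = j)) ∧
    (∀ σ σ' : Equiv.Perm (Fin n),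
      (∀ i j : Fin n, (i : ℕ) < ℓ → (j : ℕ) < ℓ → σ i ≠ i →
        (∃ k : ℤ, (σ ^ k) i = j) → i = j) →
      (∀ i j : Fin n, (i : ℕ) < ℓ → (j : ℕ) < ℓ → σ' i ≠ i →
        (∃ k : ℤ, (σ' ^ k) i = j) → i = j) →
      {x : Equiv.Perm (Fin n) | ∃ a ∈ fixSubgroup n ℓ, ∃ b ∈ fixSubgroup n ℓ, x = a * σ * b} =
        {x : Equiv.Perm (Fin n) |
          ∃ a ∈ fixSubgroup n ℓ, ∃ b ∈ fixSubgroup n ℓ, x = a * σ' * b} →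
      ∃ s ∈ fixSubgroup n ℓ, σ' = s * σ * s⁻¹) := by
  rw [fixSubgroup_eq_fixingSubgroup]
  refine ⟨fun g => ?_, fun σ σ' hσ hσ' hcoset => ?_⟩
  · obtain ⟨b, hb, hgb⟩ := Perm.exists_mul_cycleSeparated {i : Fin n | (i : ℕ) < ℓ} g
    exact ⟨g * b, ⟨1, one_mem _, b, hb, by rw [one_mul]⟩, hgb⟩
  · obtain ⟨a, ha, b, hb, rfl⟩ :=
      (Set.ext_iff.1 hcoset σ').2 ⟨1, one_mem _, 1, one_mem _, by rw [one_mul, mul_one]⟩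
    refine ⟨a, ha, ?_⟩
    rw [Perm.CycleSeparated.eq_inv_of_mul_mul (L := {i : Fin n | (i : ℕ) < ℓ}) hσ hσ' ha hb]

/-- Every `(S_ℓ,S_ℓ)`-double coset in `S_n` contains an element `σ` such that every orbit of
`σ` of size at least 2 contains at most one element of `{1,…,ℓ}` (0-indexed: index `< ℓ`);
moreover such a representative is unique up to conjugation by an element of `S_ℓ`. -/
theorem stmt_11 (n ℓ : ℕ) (hl : ℓ ≤ n) :
    (∀ g : Equiv.Perm (Fin n), ∃ σ : Equiv.Perm (Fin n),
      (∃ a ∈ fixSubgroup n ℓ, ∃ b ∈ fixSubgroup n ℓ, σ = a * g * b) ∧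
      (∀ i j : Fin n, (i : ℕ) < ℓ → (j : ℕ) < ℓ → σ i ≠ i →
        (∃ k : ℤ, (σ ^ k) i = j) → i = j)) ∧
    (∀ σ σ' : Equiv.Perm (Fin n),
      (∀ i j : Fin n, (i : ℕ) < ℓ → (j : ℕ) < ℓ → σ i ≠ i →
        (∃ k : ℤ, (σ ^ k) i = j) → i = j) →
      (∀ i j : Fin n, (i : ℕ) < ℓ → (j : ℕ) < ℓ → σ' i ≠ i →
        (∃ k : ℤ, (σ' ^ k) i = j) → i = j) →
      {x : Equiv.Perm (Fin n) | ∃ a ∈ fixSubgroup n ℓ, ∃ b ∈ fixSubgroup n ℓ, x = a * σ * b} =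
        {x : Equiv.Perm (Fin n) |
          ∃ a ∈ fixSubgroup n ℓ, ∃ b ∈ fixSubgroup n ℓ, x = a * σ' * b} →
      ∃ s ∈ fixSubgroup n ℓ, σ' = s * σ * s⁻¹) :=
  stmt_11_general n ℓ
end

section
/- Let ℓ ≤ n, let S_ℓ ≤ S_n be the subgroup of permutations fixing each of ℓ+1,…,n, and let g ∈ S_n. Then there exists an irreducible complex character χ of S(g) = S_ℓ ∩ g S_ℓ g⁻¹ with ν₂(g,χ) ≠ 0 if and only if the double coset S_ℓ g S_ℓ contains an element σ with σ² = identity. -/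
open scoped BigOperators Pointwise Classical
open CategoryTheory

/-! Only the support of the sum defining `ν₂(g,χ)` matters: for the trivial character it is
nonzero as soon as some `x ∈ S_ℓ` has `(gx)² ∈ S_ℓ`, and for every `χ` it vanishes identically
when there is no such `x`. Such an `x` exists iff `S_ℓ g S_ℓ` contains an involution: if
`σ = a g b` with `σ² = 1` then `(g·ba)² = a⁻¹σ²a = 1`; conversely, if `y = gx` has `y² ∈ S_ℓ`,
then `y` swaps the points `≥ ℓ` with their images, so `y` agrees there with an involution `σ`,
and `yσ ∈ S_ℓ`. -/

noncomputable def trivialFDRep (k G : Type) [Field k] [Group G] : FDRep k G :=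
  FDRep.of (Representation.trivial k G k)

@[simp]
lemma trivialFDRep_character (k G : Type) [Field k] [Group G] (g : G) :
    (trivialFDRep k G).character g = 1 := by
  change LinearMap.trace k k LinearMap.id = 1
  simp

instance trivialFDRep_simple (k G : Type) [Field k] [IsAlgClosed k] [CharZero k] [Group G]
    [Finite G] : Simple (trivialFDRep k G) := by
  have := Fintype.ofFinite G
  simp [FDRep.simple_iff_char_is_norm_one]

section FrobeniusSchur

variable {G : Type*} [Group G] (H : Subgroup G) (g : G)

lemma pow_mem_stabCoset_iff {x : G} (hx : x ∈ H) (m : ℕ) :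
    (g * x) ^ m ∈ stabCoset H g ↔ (g * x) ^ m ∈ H := by
  refine ⟨fun h => (Subgroup.mem_inf.mp h).1, fun h => Subgroup.mem_inf.mpr ⟨h, ?_⟩⟩
  refine ⟨x * (g * x) ^ m * x⁻¹, H.mul_mem (H.mul_mem hx h) (H.inv_mem hx), ?_⟩
  rw [MulEquiv.coe_toMonoidHom, MulAut.conj_apply]
  calc g * (x * (g * x) ^ m * x⁻¹) * g⁻¹ = (g * x) * (g * x) ^ m * (g * x)⁻¹ := by group
    _ = (g * x) ^ m := by rw [← pow_succ', pow_succ, mul_inv_cancel_right]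

lemma exists_pow_mem_of_nuInd_ne_zero {m : ℕ} {χ : stabCoset H g → ℂ}
    (h : nuInd H g m χ ≠ 0) : ∃ x ∈ H, (g * x) ^ m ∈ stabCoset H g := by
  contrapose! h
  rw [nuInd, finsum_eq_zero_of_forall_eq_zero fun x => dif_neg fun hx => h x hx.1 hx.2,
    mul_zero]

lemma nuInd_one_ne_zero [Finite G] {m : ℕ} (h : ∃ x ∈ H, (g * x) ^ m ∈ stabCoset H g) :
    nuInd H g m (fun _ => 1) ≠ 0 := by
  have := Fintype.ofFinite G
  obtain ⟨x, hx, hxS⟩ := h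
  rw [nuInd, finsum_eq_sum_of_fintype]
  simp only [map_one, dite_eq_ite, Finset.sum_boole]
  refine mul_ne_zero (by simp) (Nat.cast_ne_zero.mpr ?_)
  exact Finset.card_ne_zero.mpr ⟨x, by simp [hx, hxS]⟩

end FrobeniusSchur

theorem exists_simple_nuInd_ne_zero_iff {G : Type} [Group G] [Finite G] (H : Subgroup G)
    (g : G) (m : ℕ) :
    (∃ V : FDRep ℂ (stabCoset H g), Simple V ∧ nuInd H g m V.character ≠ 0) ↔
      ∃ x ∈ H, (g * x) ^ m ∈ H := by
  constructor
  · rintro ⟨V, -, hV⟩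
    obtain ⟨x, hx, hxS⟩ := exists_pow_mem_of_nuInd_ne_zero H g hV
    exact ⟨x, hx, (pow_mem_stabCoset_iff H g hx m).mp hxS⟩
  · rintro ⟨x, hx, hxH⟩
    refine ⟨trivialFDRep ℂ _, inferInstance, ?_⟩
    convert nuInd_one_ne_zero H g ⟨x, hx, (pow_mem_stabCoset_iff H g hx m).mpr hxH⟩
    simp

namespace Equiv.Perm

variable {α : Type*}

lemma exists_sq_eq_one_eqOn (y : Perm α) (s : Set α) (h : ∀ i ∈ s, y (y i) = i) :
    ∃ σ : Perm α, σ ^ 2 = 1 ∧ Set.EqOn σ y s := by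
  have hy : ∀ i, i ∈ s ∨ y i ∈ s → y (y i) = i := by
    rintro i (hi | hi)
    · exact h i hi
    · exact y.injective (h (y i) hi)
  set f : α → α := fun i => if i ∈ s ∨ y i ∈ s then y i else i with hf
  have hf_inv : Function.Involutive f := by
    intro i
    by_cases hi : i ∈ s ∨ y i ∈ s
    · have hyi : y i ∈ s ∨ y (y i) ∈ s := by rw [hy i hi]; exact hi.symm
      simp only [hf, if_pos hi, if_pos hyi, hy i hi]
    · simp only [hf, if_neg hi]
  refine ⟨hf_inv.toPerm f, Equiv.ext fun i => hf_inv i, fun i hi => ?_⟩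
  simp [hf, hi]

end Equiv.Perm

lemma exists_mem_fixSubgroup_mul_of_sq_mem {n ℓ : ℕ} {y : Equiv.Perm (Fin n)}
    (hy : y ^ 2 ∈ fixSubgroup n ℓ) :
    ∃ a ∈ fixSubgroup n ℓ, ∃ σ : Equiv.Perm (Fin n), σ ^ 2 = 1 ∧ y = a * σ := by
  obtain ⟨σ, hσ, hσy⟩ := y.exists_sq_eq_one_eqOn {i | ℓ ≤ (i : ℕ)} fun i hi => hy i hi
  refine ⟨y * σ, fun i hi => ?_, σ, hσ, ?_⟩
  · simpa [hσy hi, sq] using hy i hi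
  · rw [mul_assoc, ← sq, hσ, mul_one]

theorem stmt_12_general (n ℓ : ℕ) (g : Equiv.Perm (Fin n)) :
    (∃ V : FDRep ℂ ↥(stabCoset (fixSubgroup n ℓ) g), Simple V ∧
      nuInd (fixSubgroup n ℓ) g 2 V.character ≠ 0) ↔
    (∃ σ : Equiv.Perm (Fin n),
      (∃ a ∈ fixSubgroup n ℓ, ∃ b ∈ fixSubgroup n ℓ, σ = a * g * b) ∧ σ ^ 2 = 1) := by
  rw [exists_simple_nuInd_ne_zero_iff]
  constructor
  · rintro ⟨x, hx, hsq⟩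
    obtain ⟨a, ha, σ, hσ, hgx⟩ := exists_mem_fixSubgroup_mul_of_sq_mem hsq
    refine ⟨σ, ⟨a⁻¹, inv_mem ha, x, hx, ?_⟩, hσ⟩
    rw [mul_assoc, hgx]
    group
  · rintro ⟨-, ⟨a, ha, b, hb, rfl⟩, hσ⟩
    refine ⟨b * a, mul_mem hb ha, ?_⟩
    have hconj : (g * (b * a)) ^ 2 = a⁻¹ * (a * g * b) ^ 2 * a := by
      simp only [sq]
      group
    rw [hconj, hσ, mul_one, inv_mul_cancel]
    exact one_mem _

/-- For `S_ℓ ⊆ S_n` and `g ∈ S_n`: there is an irreducible complex character `χ` of `S(g)`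
with `ν₂(g,χ) ≠ 0` if and only if the double coset `S_ℓ g S_ℓ` contains an involution
(an element squaring to the identity). -/
theorem stmt_12 (n ℓ : ℕ) (hl : ℓ ≤ n) (g : Equiv.Perm (Fin n)) :
    (∃ V : FDRep ℂ ↥(stabCoset (fixSubgroup n ℓ) g), Simple V ∧
      nuInd (fixSubgroup n ℓ) g 2 V.character ≠ 0) ↔
    (∃ σ : Equiv.Perm (Fin n),
      (∃ a ∈ fixSubgroup n ℓ, ∃ b ∈ fixSubgroup n ℓ, σ = a * g * b) ∧ σ ^ 2 = 1) :=
  stmt_12_general n ℓ g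
end
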